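/- Let N, m, s ∈ ℕ with s ≥ 1, and let M be a real m × N matrix satisfying the restricted isometry property of order 2s with constant δ < 1/√2. Then every s-sparse vector is exactly recovered by ℓ¹-minimization: for every x ∈ ℝ^N with at most s nonzero entries, x is the unique minimizer of ‖z‖₁ over the set {z ∈ ℝ^N : Mz = Mx}. -/

import Mathlib

/-- A vector `z ∈ ℝ^n` is `k`-sparse: it has at most `k` nonzero entries. -/
def Sparse {n : ℕ} (k : ℕ) (z : Fin n → ℝ) : Prop :=
  ∃ S : Finset (Fin n), S.card ≤ k ∧ ∀ i ∉ S, z i = 0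

/-- The ℓ¹-norm on ℝ^n: the sum of the absolute values of the entries. -/
noncomputable def l1 {n : ℕ} (z : Fin n → ℝ) : ℝ := ∑ i, |z i|

/-- The squared Euclidean (ℓ²) norm on ℝ^n. -/
def sq2 {n : ℕ} (z : Fin n → ℝ) : ℝ := ∑ i, z i ^ 2

set_option maxHeartbeats 1000000

lemma quad_key (A P x : ℝ) (hA : 0 < A)
    (h : 0 ≤ A*(P/A)^2 - 2*P*(P/A) + x) : P^2 ≤ A*x := by
  have hμA : (P/A) * A = P := div_mul_cancel₀ P (ne_of_gt hA)
  have h1 : A*(P/A)^2 = (P/A)*P := by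
    have : A*(P/A)^2 = (P/A)*((P/A)*A) := by ring
    rw [this, hμA]
  rw [h1] at h
  have h2 : (P/A)*P ≤ x := by nlinarith
  have h3 : ((P/A)*P)*A ≤ x*A := mul_le_mul_of_nonneg_right h2 (le_of_lt hA)
  calc P^2 = ((P/A)*P)*A := by rw [mul_comm (P/A) P, mul_assoc, hμA]; ring
  _ ≤ x*A := h3
  _ = A*x := mul_comm x A

lemma core_contra (δ B Ub P Q : ℝ) (hδ0 : 0 < δ) (hδ2 : δ^2 < 1/2)
    (hB : 0 < B) (hU0 : 0 ≤ Ub) (hU : Ub ≤ B)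
    (hL : ∀ μ : ℝ, (1-δ)*(B + μ^2*Ub) ≤ P*(1-2*μ) + μ^2*Q)
    (hR : ∀ μ : ℝ, P*(1-2*μ) + μ^2*Q ≤ (1+δ)*(B + μ^2*Ub)) : False := by
  have hδ1 : δ < 1 := by nlinarith
  have hP1 : (1-δ)*B ≤ P := by have := hL 0; nlinarith
  have hP2 : P ≤ (1+δ)*B := by have := hR 0; nlinarith
  have hP0 : 0 < P := by nlinarith
  set x := P - (1-δ)*B with hxdef
  set y := (1+δ)*B - P with hydef
  have hx0 : 0 ≤ x := by simp only [hxdef]; linarith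
  have hy0 : 0 ≤ y := by simp only [hydef]; linarith
  set A1 := Q - (1-δ)*Ub with hA1def
  set A2 := (1+δ)*Ub - Q with hA2def
  have hA1 : 0 < A1 := by
    by_contra hc
    push_neg at hc
    have h := hL ((x+1)/(2*P))
    have hμ : 0 < (x+1)/(2*P) := by positivity
    nlinarith [mul_nonpos_of_nonpos_of_nonneg hc (sq_nonneg ((x+1)/(2*P))),
      mul_div_cancel₀ (x+1) (by positivity : (2:ℝ)*P ≠ 0)]
  have hA2 : 0 < A2 := by
    by_contra hc
    push_neg at hc
    have h := hR (-((y+1)/(2*P)))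
    nlinarith [mul_nonpos_of_nonpos_of_nonneg hc (sq_nonneg (-((y+1)/(2*P)))),
      mul_div_cancel₀ (y+1) (by positivity : (2:ℝ)*P ≠ 0)]
  -- P^2 ≤ A1 * x
  have key1 : P^2 ≤ A1 * x := by
    apply quad_key _ _ _ hA1
    have h := hL (P/A1)
    nlinarith [h]
  have key2 : P^2 ≤ A2 * y := by
    apply quad_key _ _ _ hA2
    have h := hR (-(P/A2))
    nlinarith [h]
  have hxpos : 0 < x := by
    rcases lt_or_eq_of_le hx0 with h | h
    · exact h
    · exfalso; nlinarith
  have hypos : 0 < y := by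
    rcases lt_or_eq_of_le hy0 with h | h
    · exact h
    · exfalso; nlinarith
  -- sum: A1 + A2 = 2δUb ≤ 2δB = x + y
  have hsum : A1 + A2 ≤ x + y := by
    have : A1 + A2 = 2*δ*Ub := by simp only [hA1def, hA2def]; ring
    have h2 : x + y = 2*δ*B := by simp only [hxdef, hydef]; ring
    rw [this, h2]
    nlinarith
  have hxy : P^2 ≤ x*y := by
    have h1 : P^2*y ≤ A1*x*y := mul_le_mul_of_nonneg_right key1 hy0
    have h2 : P^2*x ≤ A2*y*x := mul_le_mul_of_nonneg_right key2 hx0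
    have h3 : P^2*(x+y) ≤ (A1+A2)*(x*y) := by nlinarith
    have h4 : (A1+A2)*(x*y) ≤ (x+y)*(x*y) := by
      apply mul_le_mul_of_nonneg_right hsum (by positivity)
    have h5 : P^2*(x+y) ≤ (x+y)*(x*y) := le_trans h3 h4
    have hxy0 : 0 < x + y := by linarith
    have h5' : P^2*(x+y) ≤ (x*y)*(x+y) := by linarith [h5]
    exact le_of_mul_le_mul_right h5' hxy0
  -- final
  have hxyval : x*y = -(P^2) + 2*P*B - (1-δ^2)*(B*B) := by
    simp only [hxdef, hydef]; ring
  have h6 : δ^2*(B*B) < (1/2)*(B*B) :=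
    mul_lt_mul_of_pos_right hδ2 (mul_pos hB hB)
  nlinarith [sq_nonneg (2*P - B), hxy, hxyval, h6]

open Finset

/-- set of "fractional" coordinates -/
noncomputable def fracset {n : ℕ} (θ : ℝ) (v : Fin n → ℝ) : Finset (Fin n) :=
  Finset.univ.filter (fun i => 0 < v i ∧ v i < θ)

private lemma frac_two {n s : ℕ} (θ : ℝ) (v : Fin n → ℝ)
    (h0 : ∀ i, 0 ≤ v i) (h1 : ∀ i, v i ≤ θ) (hsum : ∑ i, v i ≤ s*θ)
    (hsupp : s < (Finset.univ.filter (fun i => v i ≠ 0)).card) :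
    ∃ i j : Fin n, i ≠ j ∧ (0 < v i ∧ v i < θ) ∧ (0 < v j ∧ v j < θ) := by
  classical
  set Su := Finset.univ.filter (fun i => v i ≠ 0) with hSu
  set F := fracset θ v with hF
  set K := Finset.univ.filter (fun i => v i = θ) with hK
  have hθpos : 0 < θ := by
    have : Su.Nonempty := Finset.card_pos.mp (by omega)
    obtain ⟨i, hi⟩ := this
    have : v i ≠ 0 := (Finset.mem_filter.mp hi).2
    have := lt_of_le_of_ne (h0 i) (Ne.symm this)
    linarith [h1 i]
  have hsub : Su ⊆ F ∪ K := by
    intro i hi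
    have hvi : v i ≠ 0 := (Finset.mem_filter.mp hi).2
    have hpos : 0 < v i := lt_of_le_of_ne (h0 i) (Ne.symm hvi)
    rcases lt_or_eq_of_le (h1 i) with h | h
    · exact Finset.mem_union_left _ (by simp [hF, fracset, hpos, h])
    · exact Finset.mem_union_right _ (by simp [hK, h])
  have hcard : s < F.card + K.card := by
    calc s < Su.card := hsupp
    _ ≤ (F ∪ K).card := Finset.card_le_card hsub
    _ ≤ F.card + K.card := Finset.card_union_le _ _
  -- sum over K is K.card * θ, plus possible positive from F
  have hKsum : ∀ T : Finset (Fin n), T ⊆ K → (T.card : ℝ) * θ = ∑ i ∈ T, v i := by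
    intro T hT
    rw [Finset.sum_congr rfl (fun i hi => (Finset.mem_filter.mp (hT hi)).2)]
    simp [mul_comm]
  have hFK : Disjoint F K := by
    rw [hF, hK, fracset, Finset.disjoint_filter]
    rintro i _ ⟨_, hlt⟩ heq
    exact absurd heq (ne_of_lt hlt)
  have hsumFK : ∑ i ∈ F ∪ K, v i ≤ s * θ := by
    refine le_trans (Finset.sum_le_sum_of_subset_of_nonneg (Finset.subset_univ _) ?_) hsum
    intro i _ _; exact h0 i
  by_contra hcon
  push_neg at hcon
  -- then F.card ≤ 1
  have hF1 : F.card ≤ 1 := by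
    by_contra hc
    push_neg at hc
    obtain ⟨i, hi, j, hj, hij⟩ := Finset.one_lt_card.mp hc
    have hi' := (Finset.mem_filter.mp hi).2
    have hj' := (Finset.mem_filter.mp hj).2
    linarith [hcon i j hij hi' hj'.1, hj'.2]
  have hKcard : s ≤ K.card := by omega
  have hKθ : (s : ℝ) * θ ≤ ∑ i ∈ K, v i := by
    rw [← hKsum K (le_refl _)]
    have : (s:ℝ) ≤ (K.card : ℝ) := by exact_mod_cast hKcard
    nlinarith
  have hsplit : ∑ i ∈ F ∪ K, v i = ∑ i ∈ F, v i + ∑ i ∈ K, v i :=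
    Finset.sum_union hFK
  have hFpos : 0 < ∑ i ∈ F, v i := by
    have hFne : F.Nonempty := by
      rcases Finset.eq_empty_or_nonempty F with h | h
      · exfalso
        rw [h] at hcard
        simp at hcard
        -- K.card ≥ s+1
        have : (s:ℝ) + 1 ≤ (K.card : ℝ) := by exact_mod_cast hcard
        have h2 : ((K.card : ℝ)) * θ = ∑ i ∈ K, v i := hKsum K (le_refl _)
        have h3 : ∑ i ∈ F ∪ K, v i = ∑ i ∈ K, v i := by rw [hsplit, h, Finset.sum_empty]; ring
        nlinarith
      · exact h
    obtain ⟨i, hi⟩ := hFne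
    have hi' := (Finset.mem_filter.mp hi).2
    have : 0 ≤ ∑ x ∈ F.erase i, v x :=
      Finset.sum_nonneg (fun x _ => h0 x)
    rw [← Finset.insert_erase hi, Finset.sum_insert (Finset.notMem_erase _ _)]
    linarith [hi'.1]
  nlinarith [hsplit, hsumFK, hKθ, hFpos]

lemma mem_fracset {n : ℕ} (θ : ℝ) (v : Fin n → ℝ) (r : Fin n) :
    r ∈ fracset θ v ↔ 0 < v r ∧ v r < θ := by simp [fracset]

private lemma split_step {n : ℕ} (θ : ℝ) (v : Fin n → ℝ) (i j : Fin n) (hij : i ≠ j)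
    (hi : 0 < v i ∧ v i < θ) (hj : 0 < v j ∧ v j < θ)
    (h0 : ∀ r, 0 ≤ v r) (h1 : ∀ r, v r ≤ θ) :
    ∃ (t : ℝ) (a b : Fin n → ℝ), 0 < t ∧ t < 1 ∧
      (∀ r, v r = t * a r + (1-t) * b r) ∧
      (∀ r, 0 ≤ a r) ∧ (∀ r, a r ≤ θ) ∧ (∀ r, 0 ≤ b r) ∧ (∀ r, b r ≤ θ) ∧
      ((∑ r, a r) = ∑ r, v r) ∧ ((∑ r, b r) = ∑ r, v r) ∧
      (∀ r, v r = 0 → a r = 0) ∧ (∀ r, v r = 0 → b r = 0) ∧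
      (fracset θ a).card < (fracset θ v).card ∧
      (fracset θ b).card < (fracset θ v).card := by
  classical
  have hji : ¬ (j = i) := fun h => hij h.symm
  set t1 := min (θ - v i) (v j) with ht1
  set t2 := min (v i) (θ - v j) with ht2
  have ht1a : t1 ≤ θ - v i := min_le_left _ _
  have ht1b : t1 ≤ v j := min_le_right _ _
  have ht2a : t2 ≤ v i := min_le_left _ _
  have ht2b : t2 ≤ θ - v j := min_le_right _ _
  have ht1pos : 0 < t1 := lt_min (by linarith [hi.2]) hj.1
  have ht2pos : 0 < t2 := lt_min hi.1 (by linarith [hj.2])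
  set a : Fin n → ℝ := fun r => if r = i then v i + t1 else if r = j then v j - t1 else v r with ha
  set b : Fin n → ℝ := fun r => if r = i then v i - t2 else if r = j then v j + t2 else v r with hb
  have hai : a i = v i + t1 := by simp [ha]
  have haj : a j = v j - t1 := by simp [ha, hji]
  have hbi : b i = v i - t2 := by simp [hb]
  have hbj : b j = v j + t2 := by simp [hb, hji]
  have haother : ∀ r, r ≠ i → r ≠ j → a r = v r := by intro r h h'; simp [ha, h, h']
  have hbother : ∀ r, r ≠ i → r ≠ j → b r = v r := by intro r h h'; simp [hb, h, h']
  have ha0 : ∀ r, 0 ≤ a r := by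
    intro r
    by_cases h : r = i
    · rw [h, hai]; linarith [hi.1]
    · by_cases h' : r = j
      · rw [h', haj]; linarith
      · rw [haother r h h']; exact h0 r
  have ha1 : ∀ r, a r ≤ θ := by
    intro r
    by_cases h : r = i
    · rw [h, hai]; linarith
    · by_cases h' : r = j
      · rw [h', haj]; linarith [hj.2]
      · rw [haother r h h']; exact h1 r
  have hb0 : ∀ r, 0 ≤ b r := by
    intro r
    by_cases h : r = i
    · rw [h, hbi]; linarith
    · by_cases h' : r = j
      · rw [h', hbj]; linarith [hj.1]
      · rw [hbother r h h']; exact h0 r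
  have hb1 : ∀ r, b r ≤ θ := by
    intro r
    by_cases h : r = i
    · rw [h, hbi]; linarith [hi.2]
    · by_cases h' : r = j
      · rw [h', hbj]; linarith
      · rw [hbother r h h']; exact h1 r
  have hfracsub_a : fracset θ a ⊆ fracset θ v := by
    intro r hr
    rw [mem_fracset] at hr ⊢
    by_cases h : r = i
    · rw [h]; exact hi
    · by_cases h' : r = j
      · rw [h']; exact hj
      · rwa [haother r h h'] at hr
  have hfracsub_b : fracset θ b ⊆ fracset θ v := by
    intro r hr
    rw [mem_fracset] at hr ⊢
    by_cases h : r = i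
    · rw [h]; exact hi
    · by_cases h' : r = j
      · rw [h']; exact hj
      · rwa [hbother r h h'] at hr
  have hfa : (fracset θ a).card < (fracset θ v).card := by
    apply Finset.card_lt_card
    rw [Finset.ssubset_iff_of_subset hfracsub_a]
    rcases le_or_gt (θ - v i) (v j) with hc | hc
    · refine ⟨i, (mem_fracset θ v i).mpr hi, ?_⟩
      rw [mem_fracset, hai]
      have : t1 = θ - v i := min_eq_left hc
      rw [this]
      intro hcon; linarith [hcon.2]
    · refine ⟨j, (mem_fracset θ v j).mpr hj, ?_⟩
      rw [mem_fracset, haj]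
      have : t1 = v j := min_eq_right (le_of_lt hc)
      rw [this]
      intro hcon; linarith [hcon.1]
  have hfb : (fracset θ b).card < (fracset θ v).card := by
    apply Finset.card_lt_card
    rw [Finset.ssubset_iff_of_subset hfracsub_b]
    rcases le_or_gt (v i) (θ - v j) with hc | hc
    · refine ⟨i, (mem_fracset θ v i).mpr hi, ?_⟩
      rw [mem_fracset, hbi]
      have : t2 = v i := min_eq_left hc
      rw [this]
      intro hcon; linarith [hcon.1]
    · refine ⟨j, (mem_fracset θ v j).mpr hj, ?_⟩
      rw [mem_fracset, hbj]
      have : t2 = θ - v j := min_eq_right (le_of_lt hc)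
      rw [this]
      intro hcon; linarith [hcon.2]
  refine ⟨t2/(t1+t2), a, b, by positivity, ?_, ?_, ha0, ha1, hb0, hb1, ?_, ?_, ?_, ?_, hfa, hfb⟩
  · rw [div_lt_one (by positivity)]; linarith
  · intro r
    have hden : t1 + t2 ≠ 0 := by positivity
    have hden' : (1 : ℝ) - t2/(t1+t2) = t1/(t1+t2) := by field_simp; ring
    rw [hden']
    by_cases h : r = i
    · rw [h, hai, hbi]; field_simp; ring
    · by_cases h' : r = j
      · rw [h', haj, hbj]; field_simp; ring
      · rw [haother r h h', hbother r h h']; field_simp; ring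
  · have : ∀ r, a r = v r + ((if r = i then t1 else 0) - (if r = j then t1 else 0)) := by
      intro r
      by_cases h : r = i
      · rw [h, hai, if_pos rfl, if_neg hij]; ring
      · by_cases h' : r = j
        · rw [h', haj, if_neg hji, if_pos rfl]; ring
        · rw [haother r h h', if_neg h, if_neg h']; ring
    rw [Finset.sum_congr rfl (fun r _ => this r)]
    rw [Finset.sum_add_distrib, Finset.sum_sub_distrib]
    simp
  · have : ∀ r, b r = v r + ((if r = j then t2 else 0) - (if r = i then t2 else 0)) := by
      intro r
      by_cases h : r = i
      · rw [h, hbi, if_neg hij, if_pos rfl]; ring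
      · by_cases h' : r = j
        · rw [h', hbj, if_pos rfl, if_neg hji]; ring
        · rw [hbother r h h', if_neg h', if_neg h]; ring
    rw [Finset.sum_congr rfl (fun r _ => this r)]
    rw [Finset.sum_add_distrib, Finset.sum_sub_distrib]
    simp
  · intro r hr
    have h : r ≠ i := by rintro rfl; exact absurd hr (ne_of_gt hi.1)
    have h' : r ≠ j := by rintro rfl; exact absurd hr (ne_of_gt hj.1)
    rw [haother r h h']; exact hr
  · intro r hr
    have h : r ≠ i := by rintro rfl; exact absurd hr (ne_of_gt hi.1)
    have h' : r ≠ j := by rintro rfl; exact absurd hr (ne_of_gt hj.1)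
    rw [hbother r h h']; exact hr

private lemma decomp_aux {n : ℕ} (s : ℕ) (θ : ℝ) :
    ∀ (c : ℕ) (v : Fin n → ℝ),
    (fracset θ v).card ≤ c →
    (∀ i, 0 ≤ v i) → (∀ i, v i ≤ θ) → ((∑ i, v i) ≤ s * θ) →
    ∃ (k : ℕ) (lam : Fin k → ℝ) (u : Fin k → Fin n → ℝ),
      (∀ j, 0 ≤ lam j) ∧ ((∑ j, lam j) = 1) ∧
      (∀ j i, 0 ≤ u j i) ∧ (∀ j i, u j i ≤ θ) ∧
      (∀ j, (∑ i, u j i) ≤ s * θ) ∧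
      (∀ j i, v i = 0 → u j i = 0) ∧
      (∀ j, (Finset.univ.filter (fun i => u j i ≠ 0)).card ≤ s) ∧
      (∀ i, v i = ∑ j, lam j * u j i) := by
  classical
  intro c
  induction c with
  | zero =>
    intro v hc h0 h1 hsum
    by_cases hsupp : (Finset.univ.filter (fun i => v i ≠ 0)).card ≤ s
    · exact ⟨1, fun _ => 1, fun _ => v, fun _ => zero_le_one, by simp,
        fun _ i => h0 i, fun _ i => h1 i, fun _ => hsum, fun _ _ h => h,
        fun _ => hsupp, fun i => by simp⟩
    · push_neg at hsupp
      obtain ⟨i, j, hij, hi, hj⟩ := frac_two θ v h0 h1 hsum hsupp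
      have : i ∈ fracset θ v := (mem_fracset θ v i).mpr hi
      have hpos : 0 < (fracset θ v).card := Finset.card_pos.mpr ⟨i, this⟩
      omega
  | succ c ih =>
    intro v hc h0 h1 hsum
    by_cases hsupp : (Finset.univ.filter (fun i => v i ≠ 0)).card ≤ s
    · exact ⟨1, fun _ => 1, fun _ => v, fun _ => zero_le_one, by simp,
        fun _ i => h0 i, fun _ i => h1 i, fun _ => hsum, fun _ _ h => h,
        fun _ => hsupp, fun i => by simp⟩
    · push_neg at hsupp
      obtain ⟨i, j, hij, hi, hj⟩ := frac_two θ v h0 h1 hsum hsupp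
      obtain ⟨t, a, b, ht0, ht1', hconv, ha0, ha1, hb0, hb1, hsa, hsb, hza, hzb, hfa, hfb⟩ :=
        split_step θ v i j hij hi hj h0 h1
      obtain ⟨k1, lam1, u1, hl1, hs1, hu1a, hu1b, hu1s, hu1z, hu1c, hv1⟩ :=
        ih a (by omega) ha0 ha1 (by rw [hsa]; exact hsum)
      obtain ⟨k2, lam2, u2, hl2, hs2, hu2a, hu2b, hu2s, hu2z, hu2c, hv2⟩ :=
        ih b (by omega) hb0 hb1 (by rw [hsb]; exact hsum)
      refine ⟨k1 + k2, Fin.append (fun j1 => t * lam1 j1) (fun j2 => (1-t) * lam2 j2),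
        Fin.append u1 u2, ?_, ?_, ?_, ?_, ?_, ?_, ?_, ?_⟩
      · intro j'
        refine Fin.addCases ?_ ?_ j' <;> intro p <;> simp [Fin.append_left, Fin.append_right]
        · exact mul_nonneg (le_of_lt ht0) (hl1 p)
        · exact mul_nonneg (by linarith) (hl2 p)
      · rw [Fin.sum_univ_add]
        simp only [Fin.append_left, Fin.append_right]
        rw [← Finset.mul_sum, ← Finset.mul_sum, hs1, hs2]
        ring
      · intro j'
        refine Fin.addCases ?_ ?_ j' <;> intro p <;> simp [Fin.append_left, Fin.append_right]
        · exact fun i => hu1a p i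
        · exact fun i => hu2a p i
      · intro j'
        refine Fin.addCases ?_ ?_ j' <;> intro p <;> simp [Fin.append_left, Fin.append_right]
        · exact fun i => hu1b p i
        · exact fun i => hu2b p i
      · intro j'
        refine Fin.addCases ?_ ?_ j' <;> intro p <;> simp [Fin.append_left, Fin.append_right]
        · exact hu1s p
        · exact hu2s p
      · intro j' i' hvi
        refine Fin.addCases ?_ ?_ j' <;> intro p <;> simp [Fin.append_left, Fin.append_right]
        · exact hu1z p i' (hza i' hvi)
        · exact hu2z p i' (hzb i' hvi)
      · intro j'
        refine Fin.addCases ?_ ?_ j' <;> intro p <;> simp [Fin.append_left, Fin.append_right]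
        · exact hu1c p
        · exact hu2c p
      · intro i'
        rw [Fin.sum_univ_add]
        simp only [Fin.append_left, Fin.append_right]
        have e1 : ∑ j1, t * lam1 j1 * u1 j1 i' = t * (a i') := by
          rw [hv1 i', Finset.mul_sum]
          exact Finset.sum_congr rfl (fun p _ => by ring)
        have e2 : ∑ j2, (1-t) * lam2 j2 * u2 j2 i' = (1-t) * (b i') := by
          rw [hv2 i', Finset.mul_sum]
          exact Finset.sum_congr rfl (fun p _ => by ring)
        rw [e1, e2]
        exact hconv i'

lemma decomp_signed {n : ℕ} (s : ℕ) (θ : ℝ) (v : Fin n → ℝ)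
    (h1 : ∀ i, |v i| ≤ θ) (hsum : (∑ i, |v i|) ≤ s * θ) :
    ∃ (k : ℕ) (lam : Fin k → ℝ) (u : Fin k → Fin n → ℝ),
      (∀ j, 0 ≤ lam j) ∧ ((∑ j, lam j) = 1) ∧
      (∀ j i, |u j i| ≤ θ) ∧
      (∀ j, (∑ i, |u j i|) ≤ s * θ) ∧
      (∀ j i, v i = 0 → u j i = 0) ∧
      (∀ j, (Finset.univ.filter (fun i => u j i ≠ 0)).card ≤ s) ∧
      (∀ i, v i = ∑ j, lam j * u j i) := by
  classical
  obtain ⟨k, lam, u', hl, hls, hu0, hu1, hus, huz, huc, hvc⟩ :=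
    decomp_aux s θ (fracset θ (fun i => |v i|)).card (fun i => |v i|) (le_refl _)
      (fun i => abs_nonneg _) h1 hsum
  refine ⟨k, lam, fun j i => if v i < 0 then -(u' j i) else u' j i, hl, hls, ?_, ?_, ?_, ?_, ?_⟩
  · intro j i
    have h0' := hu0 j i
    have h1' := hu1 j i
    by_cases h : v i < 0
    · simp only []
      rw [if_pos h, abs_le]; constructor <;> linarith
    · simp only []
      rw [if_neg h, abs_le]; constructor <;> linarith
  · intro j
    have : ∀ i, |if v i < 0 then -(u' j i) else u' j i| = u' j i := by
      intro i
      by_cases h : v i < 0 <;> simp [h, abs_of_nonneg (hu0 j i)]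
    rw [Finset.sum_congr rfl (fun i _ => this i)]
    exact hus j
  · intro j i hvi
    have := huz j i (by rw [hvi]; simp)
    simp [this]
  · intro j
    refine le_trans (Finset.card_le_card ?_) (huc j)
    intro i hi
    simp only [Finset.mem_filter, Finset.mem_univ, true_and] at hi ⊢
    intro h
    apply hi
    by_cases hv : v i < 0 <;> simp [hv, h]
  · intro i
    by_cases h : v i < 0
    · have : v i = -|v i| := by rw [abs_of_neg h]; ring
      rw [this, hvc i]
      rw [← Finset.sum_neg_distrib]
      exact Finset.sum_congr rfl (fun j _ => by simp [h]; try ring)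
    · have : v i = |v i| := (abs_of_nonneg (not_lt.mp h)).symm
      rw [this, hvc i]
      exact Finset.sum_congr rfl (fun j _ => by simp [h])

lemma topset_exists {n : ℕ} (f : Fin n → ℝ) :
    ∀ k : ℕ, k ≤ n → ∃ T : Finset (Fin n), T.card = k ∧
      ∀ i ∈ T, ∀ j ∉ T, f j ≤ f i := by
  intro k
  induction k with
  | zero => intro _; exact ⟨∅, rfl, fun i hi => absurd hi (Finset.notMem_empty i)⟩
  | succ k ih =>
    intro hk
    obtain ⟨T, hTcard, hTtop⟩ := ih (by omega)
    have hne : Tᶜ.Nonempty := by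
      rw [← Finset.card_pos, Finset.card_compl, hTcard]
      simp only [Fintype.card_fin]
      omega
    obtain ⟨i0, hi0mem, hi0max⟩ := Tᶜ.exists_max_image f hne
    refine ⟨insert i0 T, ?_, ?_⟩
    · rw [Finset.card_insert_of_notMem (Finset.mem_compl.mp hi0mem), hTcard]
    · intro i hi j hj
      have hjT : j ∉ T := fun h => hj (Finset.mem_insert_of_mem h)
      rcases Finset.mem_insert.mp hi with h | h
      · subst h
        exact hi0max j (Finset.mem_compl.mpr hjT)
      · exact hTtop i h j hjT

lemma topset_sum_max {n : ℕ} (f : Fin n → ℝ) (hf : ∀ i, 0 ≤ f i)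
    (T0 T : Finset (Fin n)) (htop : ∀ i ∈ T0, ∀ j ∉ T0, f j ≤ f i)
    (hcard : T.card ≤ T0.card) :
    ∑ i ∈ T, f i ≤ ∑ i ∈ T0, f i := by
  classical
  have key : ∑ i ∈ T \ T0, f i ≤ ∑ i ∈ T0 \ T, f i := by
    rcases Finset.eq_empty_or_nonempty (T0 \ T) with h | h
    · have hsub : T ⊆ T0 := by
        intro x hx
        by_contra hx0
        have hcard2 : T0 ⊆ T := by
          intro y hy
          by_contra hy0
          exact absurd (Finset.mem_sdiff.mpr ⟨hy, hy0⟩) (by rw [h]; exact Finset.notMem_empty y)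
        have := Finset.card_lt_card (Finset.ssubset_iff_of_subset hcard2 |>.mpr ⟨x, hx, hx0⟩)
        omega
      have : T \ T0 = ∅ := Finset.sdiff_eq_empty_iff_subset.mpr hsub
      rw [this, h]
    · obtain ⟨b0, hb0⟩ := h
      have hmin := Finset.exists_min_image (T0 \ T) f ⟨b0, hb0⟩
      obtain ⟨b, hbmem, hbmin⟩ := hmin
      have hcard3 : (T \ T0).card ≤ (T0 \ T).card := by
        have h1 : T.card = (T \ T0).card + (T ∩ T0).card := by
          rw [Finset.card_sdiff_add_card_inter]
        have h2 : T0.card = (T0 \ T).card + (T0 ∩ T).card := by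
          rw [Finset.card_sdiff_add_card_inter]
        rw [Finset.inter_comm] at h2
        omega
      calc ∑ i ∈ T \ T0, f i ≤ (T \ T0).card • f b := by
            apply Finset.sum_le_card_nsmul
            intro x hx
            have hxT0 : x ∉ T0 := (Finset.mem_sdiff.mp hx).2
            exact htop b (Finset.mem_sdiff.mp hbmem).1 x hxT0
      _ ≤ (T0 \ T).card • f b := nsmul_le_nsmul_left (hf b) hcard3
      _ ≤ ∑ i ∈ T0 \ T, f i := Finset.card_nsmul_le_sum _ _ _ (fun x hx => hbmin x hx)
  have h1 : ∑ i ∈ T, f i = ∑ i ∈ T ∩ T0, f i + ∑ i ∈ T \ T0, f i := by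
    rw [Finset.sum_inter_add_sum_sdiff]
  have h2 : ∑ i ∈ T0, f i = ∑ i ∈ T0 ∩ T, f i + ∑ i ∈ T0 \ T, f i := by
    rw [Finset.sum_inter_add_sum_sdiff]
  rw [Finset.inter_comm] at h2
  linarith

lemma sq2_nonneg {n : ℕ} (z : Fin n → ℝ) : 0 ≤ sq2 z :=
  Finset.sum_nonneg (fun i _ => sq_nonneg _)

lemma sq2_expand {m : ℕ} (d e : Fin m → ℝ) (μ : ℝ) :
    sq2 (fun r => d r + μ * e r) =
      sq2 d + 2*μ*(∑ r, d r * e r) + μ^2 * sq2 e := by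
  simp only [sq2]
  rw [Finset.mul_sum, Finset.mul_sum, ← Finset.sum_add_distrib, ← Finset.sum_add_distrib]
  exact Finset.sum_congr rfl (fun r _ => by ring)

lemma sq2_eq_zero {n : ℕ} (z : Fin n → ℝ) (h : sq2 z ≤ 0) : z = 0 := by
  have h0 : sq2 z = 0 := le_antisymm h (sq2_nonneg z)
  funext i
  have := (Finset.sum_eq_zero_iff_of_nonneg (fun i _ => sq_nonneg (z i))).mp h0 i (Finset.mem_univ i)
  exact pow_eq_zero_iff (n := 2) (by norm_num) |>.mp this

lemma mulVec_comb {N m : ℕ} (M : Matrix (Fin m) (Fin N) ℝ) (a b : Fin N → ℝ) (μ : ℝ) :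
    M.mulVec (fun i => a i + μ * b i) =
      fun r => M.mulVec a r + μ * M.mulVec b r := by
  have : (fun i => a i + μ * b i) = a + μ • b := by funext i; simp
  rw [this, Matrix.mulVec_add, Matrix.mulVec_smul]
  funext r; simp

lemma mulVec_sum_smul {N m k : ℕ} (M : Matrix (Fin m) (Fin N) ℝ)
    (lam : Fin k → ℝ) (u : Fin k → Fin N → ℝ) :
    M.mulVec (fun i => ∑ j, lam j * u j i) =
      fun r => ∑ j, lam j * M.mulVec (u j) r := by
  have h1 : (fun i => ∑ j, lam j * u j i) = ∑ j, lam j • u j := by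
    funext i
    rw [Finset.sum_apply]
    exact Finset.sum_congr rfl (fun j _ => rfl)
  rw [h1]
  have h2 : M.mulVec (∑ j, lam j • u j) = ∑ j, lam j • M.mulVec (u j) := by
    rw [← Matrix.mulVecLin_apply, map_sum]
    exact Finset.sum_congr rfl (fun j _ => by rw [map_smul, Matrix.mulVecLin_apply])
  rw [h2]
  funext r
  rw [Finset.sum_apply]
  exact Finset.sum_congr rfl (fun j _ => rfl)

lemma sum_lam_affine2 {k : ℕ} (lam x y : Fin k → ℝ) (a b c : ℝ) :
    ∑ j, lam j * (a + b * x j + c * y j) =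
      a * (∑ j, lam j) + b * (∑ j, lam j * x j) + c * (∑ j, lam j * y j) := by
  rw [Finset.mul_sum, Finset.mul_sum, Finset.mul_sum, ← Finset.sum_add_distrib,
    ← Finset.sum_add_distrib]
  exact Finset.sum_congr rfl (fun j _ => by ring)


lemma nsp {N m : ℕ} (s : ℕ) (hs : 1 ≤ s) (M : Matrix (Fin m) (Fin N) ℝ)
    (δ : ℝ) (hδ0 : 0 < δ) (hδ : δ < 1 / Real.sqrt 2)
    (hRIP : ∀ z : Fin N → ℝ, Sparse (2 * s) z →
      (1 - δ) * sq2 z ≤ sq2 (M.mulVec z) ∧ sq2 (M.mulVec z) ≤ (1 + δ) * sq2 z)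
    (h : Fin N → ℝ) (hker : M.mulVec h = 0) (hne : h ≠ 0)
    (T : Finset (Fin N)) (hT : T.card ≤ s) :
    ∑ i ∈ T, |h i| < ∑ i ∈ Tᶜ, |h i| := by
  classical
  have hsqrt2 : (1 / Real.sqrt 2)^2 = 1/2 := by
    rw [div_pow, one_pow, Real.sq_sqrt (by norm_num : (0:ℝ) ≤ 2)]
  have hδ2 : δ^2 < 1/2 := by
    have := pow_lt_pow_left₀ hδ (le_of_lt hδ0) (n := 2) (by norm_num)
    rwa [hsqrt2] at this
  have hδ1 : δ < 1 := by nlinarith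
  -- kernel vectors that are 2s-sparse are zero
  have hker_sparse : ∀ z : Fin N → ℝ, M.mulVec z = 0 → Sparse (2*s) z → z = 0 := by
    intro z hz hsp
    have := (hRIP z hsp).1
    rw [hz] at this
    have h0 : sq2 (0 : Fin m → ℝ) = 0 := by simp [sq2]
    rw [h0] at this
    exact sq2_eq_zero z (by nlinarith [sq2_nonneg z])
  -- support of h is large
  set Sh := Finset.univ.filter (fun i => h i ≠ 0) with hSh
  have hSh_card : 2*s < Sh.card := by
    by_contra hc
    push_neg at hc
    exact hne (hker_sparse h hker ⟨Sh, hc, fun i hi => by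
      by_contra hzi
      exact hi (Finset.mem_filter.mpr ⟨Finset.mem_univ i, hzi⟩)⟩)
  have hsN : s ≤ N := by
    have := Finset.card_le_univ Sh
    simp only [Finset.card_univ, Fintype.card_fin] at this
    omega
  -- top-s set
  obtain ⟨T0, hT0card, hT0top⟩ := topset_exists (fun i => |h i|) s hsN
  -- contradiction setup
  by_contra hcon
  push_neg at hcon
  have htot := Finset.sum_add_sum_compl T (fun i => |h i|)
  have htot0 := Finset.sum_add_sum_compl T0 (fun i => |h i|)
  have hTle : ∑ i ∈ T, |h i| ≤ ∑ i ∈ T0, |h i| :=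
    topset_sum_max (fun i => |h i|) (fun i => abs_nonneg _) T0 T hT0top (by omega)
  have hcon0 : ∑ i ∈ T0ᶜ, |h i| ≤ ∑ i ∈ T0, |h i| := by linarith
  -- θ
  set θ : ℝ := (∑ i ∈ T0, |h i|) / s with hθ
  have hsθ : (s : ℝ) * θ = ∑ i ∈ T0, |h i| := by
    rw [hθ]
    field_simp
  have hspos : (0:ℝ) < s := by exact_mod_cast hs
  -- θ > 0
  have hθpos : 0 < θ := by
    have hex : ∃ i ∈ T0, h i ≠ 0 := by
      by_contra hc
      push_neg at hc
      have hdiff : (Sh \ T0).Nonempty := by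
        rw [← Finset.card_pos]
        have := Finset.le_card_sdiff T0 Sh
        omega
      obtain ⟨j, hj⟩ := hdiff
      have hjSh : h j ≠ 0 := (Finset.mem_filter.mp (Finset.mem_sdiff.mp hj).1).2
      have hjT0 : j ∉ T0 := (Finset.mem_sdiff.mp hj).2
      rcases Finset.eq_empty_or_nonempty T0 with hT0e | ⟨i0, hi0⟩
      · rw [hT0e] at hT0card; simp at hT0card; omega
      · have := hT0top i0 hi0 j hjT0
        rw [hc i0 hi0] at this
        simp at this
        exact hjSh this
    obtain ⟨i, hiT0, hi⟩ := hex
    have h1 : 0 < |h i| := abs_pos.mpr hi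
    have h2 : |h i| ≤ ∑ i ∈ T0, |h i| :=
      Finset.single_le_sum (f := fun i => |h i|) (fun i _ => abs_nonneg _) hiT0
    rw [hθ]
    exact div_pos (lt_of_lt_of_le h1 h2) hspos
  -- split h into top part and rest
  set hTv : Fin N → ℝ := fun i => if i ∈ T0 then h i else 0 with hhTv
  set v : Fin N → ℝ := fun i => if i ∈ T0 then 0 else h i with hvdef
  have hsplit : ∀ i, h i = hTv i + v i := by
    intro i; by_cases hi : i ∈ T0 <;> simp [hhTv, hvdef, hi]
  have habs_le : ∀ i, i ∉ T0 → |h i| ≤ θ := by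
    intro i hi
    have hnsmul : T0.card • |h i| ≤ ∑ x ∈ T0, |h x| :=
      Finset.card_nsmul_le_sum T0 (fun x => |h x|) (|h i|) (fun x hx => hT0top x hx i hi)
    rw [hT0card, nsmul_eq_mul] at hnsmul
    rw [← hsθ] at hnsmul
    have := (mul_le_mul_iff_right₀ hspos).mp hnsmul
    exact this
  have hvbound : ∀ i, |v i| ≤ θ := by
    intro i
    by_cases hi : i ∈ T0
    · simp [hvdef, hi]; linarith
    · simp only [hvdef, if_neg hi]; exact habs_le i hi
  have hvsum : (∑ i, |v i|) ≤ s * θ := by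
    have e1 : (∑ i, |v i|) = ∑ i ∈ T0, |v i| + ∑ i ∈ T0ᶜ, |v i| :=
      (Finset.sum_add_sum_compl T0 _).symm
    have e2 : ∑ i ∈ T0, |v i| = 0 := by
      apply Finset.sum_eq_zero
      intro i hi; simp [hvdef, hi]
    have e3 : ∑ i ∈ T0ᶜ, |v i| = ∑ i ∈ T0ᶜ, |h i| := by
      apply Finset.sum_congr rfl
      intro i hi
      rw [Finset.mem_compl] at hi
      simp [hvdef, hi]
    rw [e1, e2, e3, hsθ]
    linarith
  obtain ⟨k, lam, u, hl, hls, hub, hus, huz, huc, hvc⟩ := decomp_signed s θ v hvbound hvsum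
  -- B and its lower bound
  set B := sq2 hTv with hBdef
  have hB_eq : B = ∑ i ∈ T0, h i ^ 2 := by
    rw [hBdef, sq2]
    rw [← Finset.sum_filter_add_sum_filter_not Finset.univ (· ∈ T0)]
    have e1 : ∑ i ∈ Finset.univ.filter (· ∈ T0), hTv i ^ 2 = ∑ i ∈ Finset.univ.filter (· ∈ T0), h i ^ 2 := by
      apply Finset.sum_congr rfl
      intro i hi
      have := (Finset.mem_filter.mp hi).2
      simp [hhTv, this]
    have e2 : ∑ i ∈ Finset.univ.filter (¬ · ∈ T0), hTv i ^ 2 = 0 := by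
      apply Finset.sum_eq_zero
      intro i hi
      have := (Finset.mem_filter.mp hi).2
      simp [hhTv, this]
    rw [e1, e2, add_zero]
    congr 1
    ext i
    simp
  have hB_lower : s * θ^2 ≤ B := by
    have hcs : (∑ i ∈ T0, |h i|) ^ 2 ≤ T0.card * ∑ i ∈ T0, |h i| ^ 2 :=
      sq_sum_le_card_mul_sum_sq
    rw [hT0card] at hcs
    have e1 : ∑ i ∈ T0, |h i| ^ 2 = ∑ i ∈ T0, h i ^ 2 :=
      Finset.sum_congr rfl (fun i _ => sq_abs _)
    rw [e1, ← hB_eq, ← hsθ] at hcs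
    have : (s:ℝ) * (s * θ^2) ≤ s * B := by nlinarith
    exact (mul_le_mul_iff_right₀ hspos).mp this
  have hBpos : 0 < B := by
    have hpos : (0:ℝ) < s * θ^2 := by positivity
    linarith
  -- bounds on u j
  have hUj : ∀ j, sq2 (u j) ≤ s * θ^2 := by
    intro j
    have e1 : sq2 (u j) ≤ θ * ∑ i, |u j i| := by
      rw [sq2, Finset.mul_sum]
      apply Finset.sum_le_sum
      intro i _
      have h1 : u j i ^ 2 = |u j i| ^ 2 := (sq_abs _).symm
      rw [h1]
      have := hub j i
      have := abs_nonneg (u j i)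
      nlinarith
    have e2 : θ * (∑ i, |u j i|) ≤ θ * (s * θ) :=
      mul_le_mul_of_nonneg_left (hus j) (le_of_lt hθpos)
    calc sq2 (u j) ≤ θ * ∑ i, |u j i| := e1
    _ ≤ θ * (s * θ) := e2
    _ = s * θ^2 := by ring
  -- disjoint supports
  have hdisj : ∀ j i, hTv i * u j i = 0 := by
    intro j i
    by_cases hi : i ∈ T0
    · have : v i = 0 := by simp [hvdef, hi]
      rw [huz j i this, mul_zero]
    · simp [hhTv, hi]
  -- sparsity
  have hsparse : ∀ (j : Fin k) (μ : ℝ), Sparse (2*s) (fun i => hTv i + μ * u j i) := by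
    intro j μ
    refine ⟨T0 ∪ Finset.univ.filter (fun i => u j i ≠ 0), ?_, ?_⟩
    · calc (T0 ∪ Finset.univ.filter (fun i => u j i ≠ 0)).card
          ≤ T0.card + (Finset.univ.filter (fun i => u j i ≠ 0)).card := Finset.card_union_le _ _
      _ ≤ s + s := by
          have := huc j
          omega
      _ = 2*s := by ring
    · intro i hi
      rw [Finset.mem_union] at hi
      push_neg at hi
      have h1 : hTv i = 0 := by simp [hhTv, hi.1]
      have h2 : u j i = 0 := by
        by_contra hc
        exact hi.2 (Finset.mem_filter.mpr ⟨Finset.mem_univ i, hc⟩)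
      simp [h1, h2]
  -- abbreviations
  set d : Fin m → ℝ := M.mulVec hTv with hd
  set P := sq2 d with hP
  have hsq2comb : ∀ (j : Fin k) (μ : ℝ),
      sq2 (fun i => hTv i + μ * u j i) = B + μ^2 * sq2 (u j) := by
    intro j μ
    rw [sq2_expand]
    have : (∑ i, hTv i * u j i) = 0 := Finset.sum_eq_zero (fun i _ => hdisj j i)
    rw [this, hBdef]
    ring
  have hexp : ∀ (j : Fin k) (μ : ℝ),
      sq2 (M.mulVec (fun i => hTv i + μ * u j i)) =
        P + 2*μ*(∑ r, d r * M.mulVec (u j) r) + μ^2 * sq2 (M.mulVec (u j)) := by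
    intro j μ
    rw [mulVec_comb, sq2_expand, hP, hd]
  -- kernel relation
  have hveq : v = fun i => ∑ j, lam j * u j i := funext hvc
  have hMv : M.mulVec v = fun r => ∑ j, lam j * M.mulVec (u j) r := by
    rw [hveq]; exact mulVec_sum_smul M lam u
  have hdv : ∀ r, ∑ j, lam j * M.mulVec (u j) r = - d r := by
    intro r
    have hh : h = fun i => hTv i + 1 * v i := by
      funext i; rw [hsplit i]; ring
    have : M.mulVec h = fun r => d r + 1 * M.mulVec v r := by
      rw [hh]; exact mulVec_comb M hTv v 1
    rw [hker] at this
    have := congrFun this.symm r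
    simp only [Pi.zero_apply, one_mul] at this
    have h2 := congrFun hMv r
    rw [h2] at this
    linarith [this]
  have hC : ∑ j, lam j * (∑ r, d r * M.mulVec (u j) r) = -P := by
    calc ∑ j, lam j * (∑ r, d r * M.mulVec (u j) r)
        = ∑ j, ∑ r, lam j * (d r * M.mulVec (u j) r) := by
          exact Finset.sum_congr rfl (fun j _ => Finset.mul_sum _ _ _)
    _ = ∑ r, ∑ j, lam j * (d r * M.mulVec (u j) r) := Finset.sum_comm
    _ = ∑ r, d r * ∑ j, lam j * M.mulVec (u j) r := by
          apply Finset.sum_congr rfl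
          intro r _
          rw [Finset.mul_sum]
          exact Finset.sum_congr rfl (fun j _ => by ring)
    _ = ∑ r, d r * (- d r) := by
          exact Finset.sum_congr rfl (fun r _ => by rw [hdv r])
    _ = -P := by
          rw [hP, sq2, ← Finset.sum_neg_distrib]
          exact Finset.sum_congr rfl (fun r _ => by ring)
  -- weighted quantities
  set Ub := ∑ j, lam j * sq2 (u j) with hUbdef
  set Q := ∑ j, lam j * sq2 (M.mulVec (u j)) with hQdef
  have hUb0 : 0 ≤ Ub :=
    Finset.sum_nonneg (fun j _ => mul_nonneg (hl j) (sq2_nonneg _))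
  have hUbB : Ub ≤ B := by
    have e1 : Ub ≤ ∑ j, lam j * (s * θ^2) :=
      Finset.sum_le_sum (fun j _ => mul_le_mul_of_nonneg_left (hUj j) (hl j))
    rw [← Finset.sum_mul, hls, one_mul] at e1
    linarith
  -- RIP weighted bounds
  have hL : ∀ μ : ℝ, (1-δ)*(B + μ^2*Ub) ≤ P*(1-2*μ) + μ^2*Q := by
    intro μ
    have hsum_le : ∑ j, lam j * ((1-δ)*(B + μ^2 * sq2 (u j))) ≤
        ∑ j, lam j * (P + 2*μ*(∑ r, d r * M.mulVec (u j) r) + μ^2 * sq2 (M.mulVec (u j))) := by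
      apply Finset.sum_le_sum
      intro j _
      apply mul_le_mul_of_nonneg_left _ (hl j)
      have := (hRIP _ (hsparse j μ)).1
      rw [hsq2comb j μ, hexp j μ] at this
      exact this
    have eL : ∑ j, lam j * ((1-δ)*(B + μ^2 * sq2 (u j))) = (1-δ)*(B + μ^2*Ub) := by
      have : ∀ j, lam j * ((1-δ)*(B + μ^2 * sq2 (u j))) =
          lam j * ((1-δ)*B + (1-δ)*μ^2 * sq2 (u j) + 0 * sq2 (u j)) := by
        intro j; ring
      rw [Finset.sum_congr rfl (fun j _ => this j), sum_lam_affine2, hls, ← hUbdef]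
      ring
    have eR : ∑ j, lam j * (P + 2*μ*(∑ r, d r * M.mulVec (u j) r) + μ^2 * sq2 (M.mulVec (u j)))
        = P*(1-2*μ) + μ^2*Q := by
      rw [sum_lam_affine2 lam (fun j => ∑ r, d r * M.mulVec (u j) r)
        (fun j => sq2 (M.mulVec (u j))) P (2*μ) (μ^2), hls, hC, ← hQdef]
      ring
    rw [eL, eR] at hsum_le
    exact hsum_le
  have hR : ∀ μ : ℝ, P*(1-2*μ) + μ^2*Q ≤ (1+δ)*(B + μ^2*Ub) := by
    intro μ
    have hsum_le : ∑ j, lam j * (P + 2*μ*(∑ r, d r * M.mulVec (u j) r) + μ^2 * sq2 (M.mulVec (u j))) ≤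
        ∑ j, lam j * ((1+δ)*(B + μ^2 * sq2 (u j))) := by
      apply Finset.sum_le_sum
      intro j _
      apply mul_le_mul_of_nonneg_left _ (hl j)
      have := (hRIP _ (hsparse j μ)).2
      rw [hsq2comb j μ, hexp j μ] at this
      exact this
    have eL : ∑ j, lam j * ((1+δ)*(B + μ^2 * sq2 (u j))) = (1+δ)*(B + μ^2*Ub) := by
      have : ∀ j, lam j * ((1+δ)*(B + μ^2 * sq2 (u j))) =
          lam j * ((1+δ)*B + (1+δ)*μ^2 * sq2 (u j) + 0 * sq2 (u j)) := by
        intro j; ring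
      rw [Finset.sum_congr rfl (fun j _ => this j), sum_lam_affine2, hls, ← hUbdef]
      ring
    have eR : ∑ j, lam j * (P + 2*μ*(∑ r, d r * M.mulVec (u j) r) + μ^2 * sq2 (M.mulVec (u j)))
        = P*(1-2*μ) + μ^2*Q := by
      rw [sum_lam_affine2 lam (fun j => ∑ r, d r * M.mulVec (u j) r)
        (fun j => sq2 (M.mulVec (u j))) P (2*μ) (μ^2), hls, hC, ← hQdef]
      ring
    rw [eL, eR] at hsum_le
    exact hsum_le
  exact core_contra δ B Ub P Q hδ0 hδ2 hBpos hUb0 hUbB hL hR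


/-- Under the RIP of order `2s` with constant `δ < 1/√2`, every `s`-sparse vector `x`
is the unique minimizer of the ℓ¹-norm over `{z : M z = M x}`. -/
theorem RIP_implies_exact_l1_recovery
    {N m : ℕ} (s : ℕ) (hs : 1 ≤ s) (M : Matrix (Fin m) (Fin N) ℝ)
    (δ : ℝ) (hδ0 : 0 < δ) (hδ : δ < 1 / Real.sqrt 2)
    (hRIP : ∀ z : Fin N → ℝ, Sparse (2 * s) z →
      (1 - δ) * sq2 z ≤ sq2 (M.mulVec z) ∧ sq2 (M.mulVec z) ≤ (1 + δ) * sq2 z) :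
    ∀ x : Fin N → ℝ, Sparse s x →
      (∀ z : Fin N → ℝ, M.mulVec z = M.mulVec x → l1 x ≤ l1 z) ∧
      (∀ z : Fin N → ℝ, M.mulVec z = M.mulVec x → l1 z ≤ l1 x → z = x) := by
  intro x hx
  obtain ⟨S, hScard, hSzero⟩ := hx
  have key : ∀ z : Fin N → ℝ, M.mulVec z = M.mulVec x → z ≠ x → l1 x < l1 z := by
    intro z hz hzne
    set dv : Fin N → ℝ := z - x with hdv
    have hker : M.mulVec dv = 0 := by
      rw [hdv, Matrix.mulVec_sub, hz, sub_self]
    have hne : dv ≠ 0 := by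
      intro hc
      apply hzne
      funext i
      have := congrFun hc i
      simp [hdv] at this
      linarith
    have hnsp := nsp s hs M δ hδ0 hδ hRIP dv hker hne S hScard
    have hdvi : ∀ i, dv i = z i - x i := fun i => rfl
    have e1 : l1 z = ∑ i ∈ S, |z i| + ∑ i ∈ Sᶜ, |z i| :=
      (Finset.sum_add_sum_compl S _).symm
    have e2 : l1 x = ∑ i ∈ S, |x i| := by
      rw [l1, ← Finset.sum_add_sum_compl S]
      have : ∑ i ∈ Sᶜ, |x i| = 0 :=
        Finset.sum_eq_zero (fun i hi => by rw [hSzero i (Finset.mem_compl.mp hi)]; simp)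
      rw [this, add_zero]
    have e3 : ∑ i ∈ Sᶜ, |z i| = ∑ i ∈ Sᶜ, |dv i| := by
      apply Finset.sum_congr rfl
      intro i hi
      rw [hdvi i, hSzero i (Finset.mem_compl.mp hi), sub_zero]
    have e4 : ∑ i ∈ S, |x i| - ∑ i ∈ S, |dv i| ≤ ∑ i ∈ S, |z i| := by
      rw [← Finset.sum_sub_distrib]
      apply Finset.sum_le_sum
      intro i _
      have hxi : x i = z i - dv i := by rw [hdvi i]; ring
      have habs : |x i| ≤ |z i| + |dv i| := by
        rw [hxi]; exact abs_sub _ _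
      linarith
    rw [e2]
    rw [e1, e3]
    linarith
  constructor
  · intro z hz
    by_cases hzx : z = x
    · rw [hzx]
    · exact le_of_lt (key z hz hzx)
  · intro z hz hle
    by_contra hzx
    exact absurd hle (not_le.mpr (key z hz hzx))
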